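/- arXiv:1005.2242 — 10 statements merged into one kernel-verified Lean document; each statement's English description precedes it below -/
import Mathlib

section
/- Let μ be a grade-2 additive set function on the power set of a finite set Ω. Then for any finite family A₁, …, A_m (m ≥ 3) of mutually disjoint subsets of Ω one has μ(A₁ ∪ ⋯ ∪ A_m) = Σ_{1 ≤ i < j ≤ m} μ(A_i ∪ A_j) − (m − 2) Σ_{i=1}^m μ(A_i). -/
/-- A set function `μ` on the power set of `Ω` is grade-2 additive if
`μ(A ∪ B ∪ C) = μ(A ∪ B) + μ(A ∪ C) + μ(B ∪ C) − μ(A) − μ(B) − μ(C)`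
for all mutually disjoint `A, B, C`. -/
def Grade2Additive {Ω : Type*} [DecidableEq Ω] (μ : Finset Ω → ℝ) : Prop :=
  ∀ A B C : Finset Ω, Disjoint A B → Disjoint A C → Disjoint B C →
    μ (A ∪ B ∪ C) = μ (A ∪ B) + μ (A ∪ C) + μ (B ∪ C) - μ A - μ B - μ C

lemma grade2_empty {Ω : Type*} [DecidableEq Ω] {μ : Finset Ω → ℝ}
    (hμ : Grade2Additive μ) : μ ∅ = 0 := by
  have := hμ ∅ ∅ ∅ (by simp) (by simp) (by simp)
  simp at this
  linarith

lemma pair_insert {ι : Type*} [LinearOrder ι] (f : ι → ι → ℝ)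
    (hf : ∀ i j, f i j = f j i) (a : ι) (u : Finset ι) (ha : a ∉ u) :
    ∑ p ∈ ((insert a u) ×ˢ (insert a u)).filter (fun p => p.1 < p.2), f p.1 p.2
      = (∑ p ∈ (u ×ˢ u).filter (fun p => p.1 < p.2), f p.1 p.2) + ∑ j ∈ u, f a j := by
  rw [Finset.sum_filter, Finset.sum_filter, Finset.sum_product, Finset.sum_product,
    Finset.sum_insert ha]
  simp only [Finset.sum_insert ha, lt_irrefl, if_false, zero_add]
  rw [Finset.sum_add_distrib]
  have h2 : ∑ j ∈ u, ((if a < j then f a j else 0) + (if j < a then f j a else 0))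
      = ∑ j ∈ u, f a j := by
    apply Finset.sum_congr rfl
    intro j hj
    have hja : j ≠ a := fun h => ha (h ▸ hj)
    rcases lt_trichotomy a j with h | h | h
    · simp [h, not_lt.mpr h.le]
    · exact absurd h.symm hja
    · simp [h, not_lt.mpr h.le, hf a j]
  rw [Finset.sum_add_distrib] at h2
  linarith

lemma aux_grade2 {Ω : Type*} [DecidableEq Ω] {ι : Type*} [LinearOrder ι]
    (μ : Finset Ω → ℝ) (hμ : Grade2Additive μ) :
    ∀ n : ℕ, ∀ s : Finset ι, s.card = n → ∀ A : ι → Finset Ω,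
    (∀ i ∈ s, ∀ j ∈ s, i ≠ j → Disjoint (A i) (A j)) →
    μ (s.biUnion A) =
      (∑ p ∈ (s ×ˢ s).filter (fun p => p.1 < p.2), μ (A p.1 ∪ A p.2))
        - ((n : ℝ) - 2) * ∑ i ∈ s, μ (A i) := by
  intro n
  induction n using Nat.strong_induction_on with
  | _ n ih =>
  intro s hcard A hd
  match n, hcard with
  | 0, hcard =>
    rw [Finset.card_eq_zero] at hcard
    subst hcard
    simp [grade2_empty hμ]
  | 1, hcard =>
    rw [Finset.card_eq_one] at hcard
    obtain ⟨a, rfl⟩ := hcard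
    simp [Finset.singleton_product_singleton, Finset.filter_singleton]
    ring
  | 2, hcard =>
    rw [Finset.card_eq_two] at hcard
    obtain ⟨a, b, hab, rfl⟩ := hcard
    have hsymm : ∀ i j : ι, μ (A i ∪ A j) = μ (A j ∪ A i) := by
      intro i j; rw [Finset.union_comm]
    rw [show ({a, b} : Finset ι) = insert a {b} from rfl,
      pair_insert (fun i j => μ (A i ∪ A j)) hsymm a {b} (by simp [hab])]
    simp [Finset.singleton_product_singleton, Finset.filter_singleton, Finset.biUnion_insert]
  | (n+3), hcard =>
    -- pick two elements a, b of s
    have h1 : 0 < s.card := by omega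
    obtain ⟨a, ha⟩ := Finset.card_pos.mp h1
    set s' := s.erase a with hs'
    have hcs' : s'.card = n + 2 := by
      rw [hs', Finset.card_erase_of_mem ha, hcard]
      omega
    have h2 : 0 < s'.card := by omega
    obtain ⟨b, hb⟩ := Finset.card_pos.mp h2
    set t := s'.erase b with ht
    have hct : t.card = n + 1 := by
      rw [ht, Finset.card_erase_of_mem hb, hcs']
      omega
    have has' : a ∉ s' := Finset.notMem_erase a s
    have hbt : b ∉ t := Finset.notMem_erase b s'
    have hbs : b ∈ s := Finset.mem_of_mem_erase hb
    have hab : a ≠ b := fun h => has' (h ▸ hb)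
    have hts' : t ⊆ s' := Finset.erase_subset b s'
    have hs's : s' ⊆ s := Finset.erase_subset a s
    have hts : t ⊆ s := hts'.trans hs's
    have hat : a ∉ t := fun h => has' (hts' h)
    have hseq : s = insert a s' := (Finset.insert_erase ha).symm
    have hs'eq : s' = insert b t := (Finset.insert_erase hb).symm
    -- disjointness facts
    have hdXb : Disjoint (t.biUnion A) (A b) := by
      rw [Finset.disjoint_biUnion_left]
      intro i hi
      exact hd i (hts hi) b hbs (fun h => hbt (h ▸ hi))
    have hdXa : Disjoint (t.biUnion A) (A a) := by
      rw [Finset.disjoint_biUnion_left]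
      intro i hi
      exact hd i (hts hi) a ha (fun h => hat (h ▸ hi))
    have hdba : Disjoint (A b) (A a) := hd b hbs a ha (fun h => hab h.symm)
    -- the key identity
    have hun : s.biUnion A = t.biUnion A ∪ A b ∪ A a := by
      rw [hseq, hs'eq, Finset.biUnion_insert, Finset.biUnion_insert]
      ext x
      simp only [Finset.mem_union]
      tauto
    have key := hμ (t.biUnion A) (A b) (A a) hdXb hdXa hdba
    rw [← hun] at key
    have hXY : t.biUnion A ∪ A b = s'.biUnion A := by
      rw [hs'eq, Finset.biUnion_insert, Finset.union_comm]
    have hXZ : t.biUnion A ∪ A a = (insert a t).biUnion A := by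
      rw [Finset.biUnion_insert, Finset.union_comm]
    rw [hXY, hXZ] at key
    -- IH applications
    have hds' : ∀ i ∈ s', ∀ j ∈ s', i ≠ j → Disjoint (A i) (A j) :=
      fun i hi j hj => hd i (hs's hi) j (hs's hj)
    have hins : ∀ i, i ∈ insert a t → i ∈ s := by
      intro i hi
      rcases Finset.mem_insert.mp hi with rfl | h
      · exact ha
      · exact hts h
    have hdit : ∀ i ∈ insert a t, ∀ j ∈ insert a t, i ≠ j → Disjoint (A i) (A j) :=
      fun i hi j hj => hd i (hins i hi) j (hins j hj)
    have hdt : ∀ i ∈ t, ∀ j ∈ t, i ≠ j → Disjoint (A i) (A j) :=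
      fun i hi j hj => hd i (hts hi) j (hts hj)
    have ihs' := ih (n+2) (by omega) s' hcs' A hds'
    have ihit := ih (n+2) (by omega) (insert a t)
      (by rw [Finset.card_insert_of_notMem hat, hct]) A hdit
    have iht := ih (n+1) (by omega) t hct A hdt
    rw [ihs', ihit, iht] at key
    -- pair sum decompositions
    have hsymm : ∀ i j : ι, μ (A i ∪ A j) = μ (A j ∪ A i) := by
      intro i j; rw [Finset.union_comm]
    have hP1 : ∑ p ∈ (s ×ˢ s).filter (fun p => p.1 < p.2), μ (A p.1 ∪ A p.2)
        = (∑ p ∈ (s' ×ˢ s').filter (fun p => p.1 < p.2), μ (A p.1 ∪ A p.2))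
          + ∑ j ∈ s', μ (A a ∪ A j) := by
      rw [hseq]; exact pair_insert _ hsymm a s' has'
    have hP2 : ∑ p ∈ (s' ×ˢ s').filter (fun p => p.1 < p.2), μ (A p.1 ∪ A p.2)
        = (∑ p ∈ (t ×ˢ t).filter (fun p => p.1 < p.2), μ (A p.1 ∪ A p.2))
          + ∑ j ∈ t, μ (A b ∪ A j) := by
      rw [hs'eq]; exact pair_insert _ hsymm b t hbt
    have hP3 : ∑ p ∈ ((insert a t) ×ˢ (insert a t)).filter (fun p => p.1 < p.2),
          μ (A p.1 ∪ A p.2)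
        = (∑ p ∈ (t ×ˢ t).filter (fun p => p.1 < p.2), μ (A p.1 ∪ A p.2))
          + ∑ j ∈ t, μ (A a ∪ A j) := pair_insert _ hsymm a t hat
    have hQ : ∑ j ∈ s', μ (A a ∪ A j)
        = μ (A a ∪ A b) + ∑ j ∈ t, μ (A a ∪ A j) := by
      rw [hs'eq, Finset.sum_insert hbt]
    have hS1 : ∑ i ∈ s, μ (A i) = μ (A a) + ∑ i ∈ s', μ (A i) := by
      rw [hseq, Finset.sum_insert has']
    have hS2 : ∑ i ∈ s', μ (A i) = μ (A b) + ∑ i ∈ t, μ (A i) := by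
      rw [hs'eq, Finset.sum_insert hbt]
    have hS3 : ∑ i ∈ insert a t, μ (A i) = μ (A a) + ∑ i ∈ t, μ (A i) :=
      Finset.sum_insert hat
    rw [hP3, hS3, hS2] at key
    rw [key, hP1, hP2, hQ, hS1, hS2, hsymm b a]
    push_cast
    ring

theorem grade2Additive_union_family {Ω : Type*} [Fintype Ω] [DecidableEq Ω]
    (μ : Finset Ω → ℝ) (hμ : Grade2Additive μ)
    (m : ℕ) (hm : 3 ≤ m) (A : Fin m → Finset Ω)
    (hdisj : ∀ i j, i ≠ j → Disjoint (A i) (A j)) :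
    μ (Finset.univ.biUnion A) =
      (∑ p ∈ Finset.univ.filter (fun p : Fin m × Fin m => p.1 < p.2), μ (A p.1 ∪ A p.2))
        - ((m : ℝ) - 2) * ∑ i, μ (A i) := by
  have := aux_grade2 μ hμ m (Finset.univ : Finset (Fin m))
    (by simp) A (fun i _ j _ h => hdisj i j h)
  rw [Finset.univ_product_univ] at this
  exact this
end

section
/- Let Ω be a finite set and let μ₁, μ₂ : P(Ω) → ℝ be finitely additive nonnegative measures (i.e. μ_k(∅) = 0, μ_k(A) ≥ 0, and μ_k(A ∪ B) = μ_k(A) + μ_k(B) for disjoint A, B). Then the pointwise product A ↦ μ₁(A)·μ₂(A) is a q-measure on P(Ω), i.e. it is nonnegative and grade-2 additive. -/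
theorem product_of_measures_is_qMeasure {Ω : Type*} [Fintype Ω] [DecidableEq Ω]
    (μ₁ μ₂ : Finset Ω → ℝ)
    (h₁0 : μ₁ ∅ = 0) (h₂0 : μ₂ ∅ = 0)
    (h₁n : ∀ A, 0 ≤ μ₁ A) (h₂n : ∀ A, 0 ≤ μ₂ A)
    (h₁a : ∀ A B, Disjoint A B → μ₁ (A ∪ B) = μ₁ A + μ₁ B)
    (h₂a : ∀ A B, Disjoint A B → μ₂ (A ∪ B) = μ₂ A + μ₂ B) :
    (∀ A, 0 ≤ μ₁ A * μ₂ A) ∧ Grade2Additive (fun A => μ₁ A * μ₂ A) := by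
  refine ⟨fun A => mul_nonneg (h₁n A) (h₂n A), ?_⟩
  intro A B C hAB hAC hBC
  have hABC : Disjoint (A ∪ B) C := Finset.disjoint_union_left.mpr ⟨hAC, hBC⟩
  simp only
  rw [h₁a _ _ hABC, h₂a _ _ hABC, h₁a _ _ hAB, h₂a _ _ hAB,
    h₁a _ _ hAC, h₂a _ _ hAC, h₁a _ _ hBC, h₂a _ _ hBC]
  ring
end

section
/- Let Ω = {ω₁, …, ω_n} be a finite set. Every signed q-measure μ on P(Ω) (i.e. every grade-2 additive set function μ : P(Ω) → ℝ) has a unique representation μ = Σ_{i=1}^n c_i δ_{ω_i} + Σ_{i<j} d_{ij} δ̂_{ω_i ω_j} with real coefficients c_i, d_{ij}; moreover necessarily c_i = μ({ω_i}) and d_{ij} = μ({ω_i, ω_j}) − μ({ω_i}) − μ({ω_j}). In particular the functions δ_{ω_1}, …, δ_{ω_n}, δ̂_{ω_i ω_j} (i < j) form a basis of the real vector space of signed q-measures on P(Ω). -/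
/-- The Dirac measure `δ_i`. -/
def dirac {Ω : Type*} [DecidableEq Ω] (ω : Ω) (A : Finset Ω) : ℝ :=
  if ω ∈ A then 1 else 0

/-- The doubleton indicator `δ̂_{ωω'}`. -/
def diracHat {Ω : Type*} [DecidableEq Ω] (ω ω' : Ω) (A : Finset Ω) : ℝ :=
  if ω ∈ A ∧ ω' ∈ A then 1 else 0

section Aux

variable {Ω : Type*} [DecidableEq Ω]

lemma g2_dirac (ω : Ω) : Grade2Additive (dirac ω) := by
  intro A B C hAB hAC hBC
  rw [Finset.disjoint_left] at hAB hAC hBC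
  by_cases hA : ω ∈ A <;> by_cases hB : ω ∈ B <;> by_cases hC : ω ∈ C <;>
    simp_all [dirac, Finset.mem_union]

lemma g2_diracHat (ω ω' : Ω) : Grade2Additive (diracHat ω ω') := by
  intro A B C hAB hAC hBC
  rw [Finset.disjoint_left] at hAB hAC hBC
  by_cases hA : ω ∈ A <;> by_cases hB : ω ∈ B <;> by_cases hC : ω ∈ C <;>
  by_cases hA' : ω' ∈ A <;> by_cases hB' : ω' ∈ B <;> by_cases hC' : ω' ∈ C <;>
    simp_all [diracHat, Finset.mem_union]

lemma g2_smul {μ : Finset Ω → ℝ} (r : ℝ) (hμ : Grade2Additive μ) :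
    Grade2Additive (fun A => r * μ A) := by
  intro A B C hAB hAC hBC
  simp only
  rw [hμ A B C hAB hAC hBC]; ring

lemma g2_sum {ι : Type*} (s : Finset ι) (f : ι → Finset Ω → ℝ)
    (hf : ∀ i ∈ s, Grade2Additive (f i)) :
    Grade2Additive (fun A => ∑ i ∈ s, f i A) := by
  intro A B C hAB hAC hBC
  simp only
  rw [Finset.sum_congr rfl (fun i hi => hf i hi A B C hAB hAC hBC)]
  simp [Finset.sum_add_distrib, Finset.sum_sub_distrib]

lemma g2_add {μ ν : Finset Ω → ℝ} (hμ : Grade2Additive μ) (hν : Grade2Additive ν) :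
    Grade2Additive (fun A => μ A + ν A) := by
  intro A B C hAB hAC hBC
  simp only
  rw [hμ A B C hAB hAC hBC, hν A B C hAB hAC hBC]; ring

lemma g2_empty {μ : Finset Ω → ℝ} (hμ : Grade2Additive μ) : μ ∅ = 0 := by
  have := hμ ∅ ∅ ∅ (by simp) (by simp) (by simp)
  simp at this
  linarith

lemma g2_agree {μ ν : Finset Ω → ℝ} (hμ : Grade2Additive μ) (hν : Grade2Additive ν)
    (h2 : ∀ A : Finset Ω, A.card ≤ 2 → μ A = ν A) : ∀ A, μ A = ν A := by
  intro A
  induction A using Finset.strongInduction with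
  | _ A ih =>
    by_cases hcard : A.card ≤ 2
    · exact h2 A hcard
    · push_neg at hcard
      obtain ⟨a, ha⟩ : A.Nonempty := Finset.card_pos.mp (by omega)
      obtain ⟨b, hb⟩ : (A.erase a).Nonempty :=
        Finset.card_pos.mp (by rw [Finset.card_erase_of_mem ha]; omega)
      have hba : b ≠ a := Finset.ne_of_mem_erase hb
      have hbA : b ∈ A := Finset.mem_of_mem_erase hb
      set C : Finset Ω := (A.erase a).erase b with hC
      have hkey : A = {a} ∪ {b} ∪ C := by
        ext x
        simp only [Finset.mem_union, Finset.mem_singleton, hC, Finset.mem_erase]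
        by_cases hxa : x = a <;> by_cases hxb : x = b <;> subst_eqs <;> tauto
      have haC : a ∉ C := by simp [hC]
      have hbC : b ∉ C := by simp [hC]
      have dab : Disjoint ({a} : Finset Ω) {b} := Finset.disjoint_singleton.mpr (Ne.symm hba)
      have dac : Disjoint ({a} : Finset Ω) C := Finset.disjoint_singleton_left.mpr haC
      have dbc : Disjoint ({b} : Finset Ω) C := Finset.disjoint_singleton_left.mpr hbC
      have eaC : {a} ∪ C = A.erase b := by
        rw [← Finset.insert_eq, hC, Finset.erase_right_comm,
          Finset.insert_erase (Finset.mem_erase.mpr ⟨fun h => hba h.symm, ha⟩)]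
      have ebC : {b} ∪ C = A.erase a := by
        rw [← Finset.insert_eq, hC, Finset.insert_erase (Finset.mem_erase.mpr ⟨hba, hbA⟩)]
      have h1 : μ ({a} ∪ {b}) = ν ({a} ∪ {b}) :=
        h2 _ (le_trans (Finset.card_union_le _ _) (by simp))
      have hCe : μ C = ν C := ih C (by
        refine Finset.ssubset_of_subset_of_ssubset ?_ (Finset.erase_ssubset ha)
        exact Finset.erase_subset _ _)
      have h3 : μ ({a} ∪ C) = ν ({a} ∪ C) := by rw [eaC]; exact ih _ (Finset.erase_ssubset hbA)
      have h4 : μ ({b} ∪ C) = ν ({b} ∪ C) := by rw [ebC]; exact ih _ (Finset.erase_ssubset ha)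
      have h5 : μ {a} = ν {a} := h2 _ (by simp)
      have h6 : μ {b} = ν {b} := h2 _ (by simp)
      rw [hkey, hμ _ _ _ dab dac dbc, hν _ _ _ dab dac dbc, h1, h3, h4, h5, h6, hCe]

end Aux

section QRepSec

variable {n : ℕ}

noncomputable def QRep (c : Fin n → ℝ) (d : Fin n → Fin n → ℝ) (A : Finset (Fin n)) : ℝ :=
  (∑ i, c i * dirac i A)
    + ∑ p ∈ Finset.univ.filter (fun p : Fin n × Fin n => p.1 < p.2),
        d p.1 p.2 * diracHat p.1 p.2 A

lemma g2_QRep (c : Fin n → ℝ) (d : Fin n → Fin n → ℝ) : Grade2Additive (QRep c d) :=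
  g2_add (g2_sum _ _ fun i _ => g2_smul (c i) (g2_dirac i))
    (g2_sum _ _ fun p _ => g2_smul (d p.1 p.2) (g2_diracHat p.1 p.2))

lemma QRep_singleton (c : Fin n → ℝ) (d : Fin n → Fin n → ℝ) (i : Fin n) :
    QRep c d {i} = c i := by
  unfold QRep
  rw [Finset.sum_eq_single i (fun j _ hj => by simp [dirac, hj])
    (fun h => absurd (Finset.mem_univ i) h)]
  rw [Finset.sum_eq_zero]
  · simp [dirac]
  · rintro ⟨x, y⟩ hp
    simp only [Finset.mem_filter] at hp
    have : ¬ (x ∈ ({i} : Finset (Fin n)) ∧ y ∈ ({i} : Finset (Fin n))) := by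
      rintro ⟨hx, hy⟩
      simp only [Finset.mem_singleton] at hx hy
      subst hx; subst hy
      exact lt_irrefl _ hp.2
    simp only [diracHat, if_neg this, mul_zero]

lemma QRep_pair (c : Fin n → ℝ) (d : Fin n → Fin n → ℝ) {i j : Fin n} (hij : i < j) :
    QRep c d {i, j} = c i + c j + d i j := by
  have hne : i ≠ j := ne_of_lt hij
  unfold QRep
  have e1 : (∑ k, c k * dirac k ({i, j} : Finset (Fin n))) = c i + c j := by
    simp only [dirac, mul_ite, mul_one, mul_zero]
    rw [Finset.sum_ite_mem, Finset.univ_inter, Finset.sum_pair hne]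
  have e2 : (∑ p ∈ Finset.univ.filter (fun p : Fin n × Fin n => p.1 < p.2),
      d p.1 p.2 * diracHat p.1 p.2 ({i, j} : Finset (Fin n))) = d i j := by
    rw [Finset.sum_eq_single_of_mem (i, j) (by simp [hij])]
    · simp [diracHat]
    · rintro ⟨x, y⟩ hp hne'
      simp only [Finset.mem_filter] at hp
      have : ¬ (x ∈ ({i, j} : Finset (Fin n)) ∧ y ∈ ({i, j} : Finset (Fin n))) := by
        rintro ⟨hx, hy⟩
        simp only [Finset.mem_insert, Finset.mem_singleton] at hx hy
        have hlt := hp.2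
        rcases hx with rfl | rfl <;> rcases hy with rfl | rfl
        · exact lt_irrefl _ hlt
        · exact hne' (by simp)
        · exact lt_irrefl _ (hij.trans hlt)
        · exact lt_irrefl _ hlt
      simp only [diracHat, if_neg this, mul_zero]
  rw [e1, e2]

end QRepSec

/-- Every signed q-measure on `P(Fin n)` is represented uniquely as a linear combination
of the Dirac measures `δ_i` and the doubleton indicators `δ̂_{ij}` (`i < j`); the
coefficients are necessarily `c i = μ {i}` and `d i j = μ {i,j} − μ {i} − μ {j}`.
In particular these functions form a basis of the space of signed q-measures. -/
theorem signed_qMeasure_basis_representation (n : ℕ) (μ : Finset (Fin n) → ℝ)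
    (hμ : Grade2Additive μ) (c : Fin n → ℝ) (d : Fin n → Fin n → ℝ) :
    (∀ A : Finset (Fin n),
        μ A = (∑ i, c i * dirac i A)
            + ∑ p ∈ Finset.univ.filter (fun p : Fin n × Fin n => p.1 < p.2),
                d p.1 p.2 * diracHat p.1 p.2 A)
    ↔ ((∀ i, c i = μ {i}) ∧
       (∀ i j, i < j → d i j = μ {i, j} - μ {i} - μ {j})) := by
  have hQRepDef : ∀ A : Finset (Fin n), QRep c d A
      = (∑ i, c i * dirac i A)
            + ∑ p ∈ Finset.univ.filter (fun p : Fin n × Fin n => p.1 < p.2),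
                d p.1 p.2 * diracHat p.1 p.2 A := fun A => rfl
  constructor
  · intro h
    refine ⟨fun i => ?_, fun i j hij => ?_⟩
    · rw [h {i}, ← hQRepDef, QRep_singleton]
    · rw [h {i, j}, h {i}, h {j}, ← hQRepDef, ← hQRepDef, ← hQRepDef,
        QRep_pair c d hij, QRep_singleton, QRep_singleton]
      ring
  · rintro ⟨hc, hd⟩ A
    rw [← hQRepDef]
    refine g2_agree hμ (g2_QRep c d) (fun B hB => ?_) A
    interval_cases h : B.card
    · rw [Finset.card_eq_zero.mp h, g2_empty hμ, g2_empty (g2_QRep c d)]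
    · obtain ⟨i, rfl⟩ := Finset.card_eq_one.mp h
      rw [QRep_singleton, hc]
    · obtain ⟨i, j, hne, rfl⟩ := Finset.card_eq_two.mp h
      rcases lt_or_gt_of_ne hne with hij | hji
      · rw [QRep_pair c d hij, hc, hc, hd i j hij]; ring
      · rw [Finset.pair_comm, QRep_pair c d hji, hc, hc, hd j i hji, Finset.pair_comm]; ring
end

section
/- Let Ω be a finite set, let μ be a q-measure on P(Ω), and let α : Ω × Ω → ℝ be the unique symmetric function with μ(A) = Σ_{x ∈ A} Σ_{y ∈ A} α(x, y) for all A ⊆ Ω. Then for every function f : Ω → ℝ with f ≥ 0, the q-integral of f satisfies ∫ f dμ := ∫₀^∞ μ({ω ∈ Ω : f(ω) > t}) dt = Σ_{x ∈ Ω} Σ_{y ∈ Ω} min(f(x), f(y)) α(x, y), where the left-hand integral is the Lebesgue integral over (0, ∞) of the real-valued function t ↦ μ({ω : f(ω) > t}). -/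
/-! Layer cake for pairs: `t ↦ μ {f > t}` is the sum over pairs `(x, y)` of `α x y` times the
indicator of `t < min (f x) (f y)`, and integrating that indicator over `t > 0` gives
`min (f x) (f y)`. -/

open MeasureTheory

open Set

lemma sum_sum_filter_lt_eq_sum_sum_indicator {ι M : Type*} [Fintype ι] [AddCommMonoid M]
    (g : ι → ι → M) (f : ι → ℝ) (t : ℝ) :
    ∑ x ∈ Finset.univ.filter (t < f ·), ∑ y ∈ Finset.univ.filter (t < f ·), g x y =
      ∑ x, ∑ y, (Iio (min (f x) (f y))).indicator (fun _ => g x y) t := by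
  simp [Finset.sum_filter, indicator_apply, ite_and, Finset.sum_ite_irrel]

lemma integrableOn_Ioi_indicator_Iio_const (m c : ℝ) :
    IntegrableOn ((Iio m).indicator fun _ => c) (Ioi 0) := by
  rw [IntegrableOn, integrable_indicator_iff measurableSet_Iio, IntegrableOn,
    Measure.restrict_restrict measurableSet_Iio, Iio_inter_Ioi]
  exact integrableOn_const measure_Ioo_lt_top.ne

lemma setIntegral_Ioi_indicator_Iio_const {m : ℝ} (hm : 0 ≤ m) (c : ℝ) :
    ∫ t in Ioi 0, (Iio m).indicator (fun _ => c) t = m * c := by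
  rw [setIntegral_indicator measurableSet_Iio, Ioi_inter_Iio, setIntegral_const,
    Real.volume_real_Ioo_of_le hm, sub_zero, smul_eq_mul]

theorem qIntegral_eq_double_sum_min_general {Ω : Type*} [Fintype Ω]
    (μ : Finset Ω → ℝ)
    (α : Ω → Ω → ℝ)
    (hrep : ∀ A : Finset Ω, μ A = ∑ x ∈ A, ∑ y ∈ A, α x y)
    (f : Ω → ℝ) (hf : ∀ ω, 0 ≤ f ω) :
    (∫ t in Set.Ioi (0 : ℝ), μ (Finset.univ.filter fun ω => t < f ω)) =
      ∑ x, ∑ y, min (f x) (f y) * α x y := by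
  simp_rw [hrep, sum_sum_filter_lt_eq_sum_sum_indicator]
  rw [integral_finsetSum _ fun x _ => integrable_finsetSum _ fun y _ =>
    integrableOn_Ioi_indicator_Iio_const _ _]
  refine Finset.sum_congr rfl fun x _ => ?_
  rw [integral_finsetSum _ fun y _ => integrableOn_Ioi_indicator_Iio_const _ _]
  exact Finset.sum_congr rfl fun y _ =>
    setIntegral_Ioi_indicator_Iio_const (le_min (hf x) (hf y)) _

theorem qIntegral_eq_double_sum_min {Ω : Type*} [Fintype Ω] [DecidableEq Ω]
    (μ : Finset Ω → ℝ) (hμ : Grade2Additive μ) (hpos : ∀ A, 0 ≤ μ A)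
    (α : Ω → Ω → ℝ) (hsym : ∀ x y, α x y = α y x)
    (hrep : ∀ A : Finset Ω, μ A = ∑ x ∈ A, ∑ y ∈ A, α x y)
    (f : Ω → ℝ) (hf : ∀ ω, 0 ≤ f ω) :
    (∫ t in Set.Ioi (0 : ℝ), μ (Finset.univ.filter fun ω => t < f ω)) =
      ∑ x, ∑ y, min (f x) (f y) * α x y :=
  qIntegral_eq_double_sum_min_general μ α hrep f hf
end

section
/- Let a < b be real numbers and let f : ℝ → ℝ be monotone nondecreasing on [a, b]. Then ∫_a^b ∫_a^b min(f(x), f(y)) dx dy = 2 ∫_a^b f(x)(b − x) dx. -/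
/-!
For `y ∈ [a, b]`, monotonicity makes `min (f x) (f y)` equal to `f x` for `x ≤ y` and to `f y`
for `x ≥ y`, so the inner integral is `∫_a^y f + (b - y) f y`. Integrating in `y`, Fubini on the
triangle `x ≤ y` turns `∫_a^b ∫_a^y f` into `∫_a^b (b - x) f x`, a second copy of the other term.
-/

open MeasureTheory intervalIntegral Set

theorem integral_primitive_eq_integral_smul {E : Type*} [NormedAddCommGroup E]
    [NormedSpace ℝ E] [CompleteSpace E] {g : ℝ → E} {a b : ℝ} (hab : a ≤ b)
    (hg : IntervalIntegrable g volume a b) :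
    ∫ y in a..b, ∫ x in a..y, g x = ∫ x in a..b, (b - x) • g x := by
  set F : ℝ → ℝ → E := fun y => (Iic y).indicator g
  have hF : Function.uncurry F = {p : ℝ × ℝ | p.2 ≤ p.1}.indicator (fun p => g p.2) := by
    ext ⟨y, x⟩
    simp [F, indicator]
  have hF_int : Integrable (Function.uncurry F)
      ((volume.restrict (Ioc a b)).prod (volume.restrict (Ioc a b))) := by
    rw [hF]
    exact (hg.1.comp_snd _).indicator (measurableSet_le measurable_snd measurable_fst)
  rw [integral_of_le hab, integral_of_le hab]
  calc ∫ y in Ioc a b, ∫ x in a..y, g x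
      = ∫ y in Ioc a b, ∫ x in Ioc a b, F y x := by
        refine setIntegral_congr_fun measurableSet_Ioc fun y hy => ?_
        rw [setIntegral_indicator measurableSet_Iic, Ioc_inter_Iic, inf_eq_right.2 hy.2,
          integral_of_le hy.1.le]
    _ = ∫ x in Ioc a b, ∫ y in Ioc a b, F y x := integral_integral_swap hF_int
    _ = ∫ x in Ioc a b, (b - x) • g x := by
        refine setIntegral_congr_fun measurableSet_Ioc fun x hx => ?_
        have hFx : (fun y => F y x) = (Ici x).indicator fun _ => g x := by
          ext y
          simp [F, indicator]
        have hset : Ioc a b ∩ Ici x = Icc x b := by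
          ext y
          simp only [mem_inter_iff, mem_Ioc, mem_Ici, mem_Icc]
          constructor
          · rintro ⟨⟨-, hyb⟩, hxy⟩
            exact ⟨hxy, hyb⟩
          · rintro ⟨hxy, hyb⟩
            exact ⟨⟨hx.1.trans_le hxy, hyb⟩, hxy⟩
        rw [hFx, setIntegral_indicator measurableSet_Ici, hset, setIntegral_const,
          Real.volume_real_Icc_of_le hx.2]

theorem MonotoneOn.integral_min_eq {f : ℝ → ℝ} {a b y : ℝ} (hf : MonotoneOn f (Icc a b))
    (hy : y ∈ Icc a b) :
    ∫ x in a..b, min (f x) (f y) = (∫ x in a..y, f x) + (b - y) * f y := by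
  have hmin : MonotoneOn (fun x => min (f x) (f y)) (Icc a b) := hf.min monotoneOn_const
  have ha : a ∈ Icc a b := ⟨le_rfl, hy.1.trans hy.2⟩
  have hb : b ∈ Icc a b := ⟨hy.1.trans hy.2, le_rfl⟩
  rw [← integral_add_adjacent_intervals
    ((hmin.mono (uIcc_subset_Icc ha hy)).intervalIntegrable)
    ((hmin.mono (uIcc_subset_Icc hy hb)).intervalIntegrable)]
  congr 1
  · refine integral_congr fun x hx => min_eq_left (hf (uIcc_subset_Icc ha hy hx) hy ?_)
    exact (uIcc_of_le hy.1 ▸ hx).2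
  · have hconst : EqOn (fun x => min (f x) (f y)) (fun _ => f y) (uIcc y b) := fun x hx =>
      min_eq_right (hf hy (uIcc_subset_Icc hy hb hx) (uIcc_of_le hy.2 ▸ hx).1)
    rw [integral_congr hconst, intervalIntegral.integral_const, smul_eq_mul]

theorem qIntegral_monotone (a b : ℝ) (hab : a < b) (f : ℝ → ℝ)
    (hf : MonotoneOn f (Set.Icc a b)) :
    (∫ y in a..b, ∫ x in a..b, min (f x) (f y)) = 2 * ∫ x in a..b, f x * (b - x) := by
  have hf_int : IntervalIntegrable f volume a b := (uIcc_of_le hab.le ▸ hf).intervalIntegrable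
  have hprimitive_int : IntervalIntegrable (fun y => ∫ x in a..y, f x) volume a b :=
    (continuousOn_primitive_interval' hf_int left_mem_uIcc).intervalIntegrable
  have hweighted_int : IntervalIntegrable (fun y => (b - y) * f y) volume a b :=
    hf_int.continuousOn_mul (by fun_prop)
  calc (∫ y in a..b, ∫ x in a..b, min (f x) (f y))
      = ∫ y in a..b, (∫ x in a..y, f x) + (b - y) * f y :=
        integral_congr fun y hy => hf.integral_min_eq (uIcc_of_le hab.le ▸ hy)
    _ = (∫ y in a..b, ∫ x in a..y, f x) + ∫ y in a..b, (b - y) * f y :=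
        integral_add hprimitive_int hweighted_int
    _ = 2 * ∫ x in a..b, f x * (b - x) := by
        simp only [integral_primitive_eq_integral_smul hab.le hf_int, smul_eq_mul, mul_comm (f _)]
        ring
end

section
/- Let a < b be real numbers and let f : ℝ → ℝ be monotone nonincreasing on [a, b]. Then ∫_a^b ∫_a^b min(f(x), f(y)) dx dy = 2 ∫_a^b f(x)(x − a) dx. -/
/-!
For `f` antitone on `[a, b]` we have `min (f x) (f y) = f (max x y)`, and the identity
`∫∫ f (max x y) = 2 ∫ f x (x - a)` holds for every integrable `f`: splitting the inner integral
at `y` gives `f y (y - a) + ∫_y^b f`, and Fubini over the triangle `a < y < x ≤ b` turns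
`∫_a^b ∫_y^b f` into `∫_a^b f x (x - a)` as well.
-/

open MeasureTheory intervalIntegral Set

theorem integral_comp_max_right {g : ℝ → ℝ} {a b y : ℝ} (hy : y ∈ Icc a b)
    (hg : IntervalIntegrable g volume a b) :
    ∫ x in a..b, g (max x y) = g y * (y - a) + ∫ x in y..b, g x := by
  have hlow : EqOn (fun x => g (max x y)) (fun _ => g y) (uIcc a y) := fun x hx => by
    rw [uIcc_of_le hy.1] at hx
    simp only [max_eq_right hx.2]
  have hhigh : EqOn (fun x => g (max x y)) g (uIcc y b) := fun x hx => by
    rw [uIcc_of_le hy.2] at hx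
    simp only [max_eq_left hx.1]
  have hg_high : IntervalIntegrable g volume y b :=
    hg.mono_set (uIcc_subset_uIcc (mem_uIcc_of_le hy.1 hy.2) right_mem_uIcc)
  rw [← integral_add_adjacent_intervals
      ((intervalIntegrable_congr (hlow.mono uIoc_subset_uIcc)).2 intervalIntegrable_const)
      ((intervalIntegrable_congr (hhigh.mono uIoc_subset_uIcc)).2 hg_high),
    integral_congr hlow, integral_congr hhigh, intervalIntegral.integral_const, smul_eq_mul,
    mul_comm]

theorem integral_integral_tail_eq_integral_mul_sub {g : ℝ → ℝ} {a b : ℝ} (hab : a ≤ b)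
    (hg : IntervalIntegrable g volume a b) :
    ∫ y in a..b, ∫ x in y..b, g x = ∫ x in a..b, g x * (x - a) := by
  have hF : IntegrableOn (Function.uncurry fun y => (Ioi y).indicator g) (Ioc a b ×ˢ Ioc a b) := by
    have hF_eq : (Function.uncurry fun y => (Ioi y).indicator g) =
        {p : ℝ × ℝ | p.1 < p.2}.indicator fun p => g p.2 := by
      funext ⟨y, x⟩
      simp [indicator_apply]
    rw [hF_eq, IntegrableOn, Measure.volume_eq_prod, ← Measure.prod_restrict]
    exact (((intervalIntegrable_iff_integrableOn_Ioc_of_le hab).1 hg).comp_snd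
      (volume.restrict (Ioc a b))).indicator (measurableSet_lt measurable_fst measurable_snd)
  calc ∫ y in a..b, ∫ x in y..b, g x = ∫ y in a..b, ∫ x in a..b, (Ioi y).indicator g x :=
        integral_congr fun y hy => by
          rw [uIcc_of_le hab] at hy
          rw [integral_of_le hab, setIntegral_indicator measurableSet_Ioi, Ioc_inter_Ioi,
            max_eq_right hy.1, integral_of_le hy.2]
    _ = ∫ x in a..b, ∫ y in a..b, (Ioi y).indicator g x :=
        intervalIntegral_intervalIntegral_swap (by simpa [uIoc_of_le hab] using hF)
    _ = ∫ x in a..b, g x * (x - a) := integral_congr fun x hx => by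
          rw [uIcc_of_le hab] at hx
          have hIio : (fun y => (Ioi y).indicator g x) = (Iio x).indicator fun _ => g x := by
            ext y; simp [indicator_apply]
          rw [hIio, integral_congr_ae ((indicator_ae_eq_of_ae_eq_set Iio_ae_eq_Iic).mono
              fun _ h _ => h)]
          exact (integral_indicator hx).trans (by
            rw [intervalIntegral.integral_const, smul_eq_mul, mul_comm])

theorem integral_integral_comp_max {g : ℝ → ℝ} {a b : ℝ} (hab : a ≤ b)
    (hg : IntervalIntegrable g volume a b) :
    ∫ y in a..b, ∫ x in a..b, g (max x y) = 2 * ∫ x in a..b, g x * (x - a) := by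
  have hg_Icc : IntegrableOn g (uIcc a b) := (intervalIntegrable_iff').1 hg
  calc ∫ y in a..b, ∫ x in a..b, g (max x y)
      = ∫ y in a..b, (g y * (y - a) + ∫ x in y..b, g x) := integral_congr fun y hy =>
        integral_comp_max_right (by rwa [uIcc_of_le hab] at hy) hg
    _ = (∫ y in a..b, g y * (y - a)) + ∫ y in a..b, ∫ x in y..b, g x :=
        intervalIntegral.integral_add (hg.mul_continuousOn (continuous_sub_right a).continuousOn)
          ((continuousOn_primitive_interval_left hg_Icc).intervalIntegrable)
    _ = 2 * ∫ x in a..b, g x * (x - a) := by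
        rw [integral_integral_tail_eq_integral_mul_sub hab hg]; ring

theorem qIntegral_antitone (a b : ℝ) (hab : a < b) (f : ℝ → ℝ)
    (hf : AntitoneOn f (Set.Icc a b)) :
    (∫ y in a..b, ∫ x in a..b, min (f x) (f y)) = 2 * ∫ x in a..b, f x * (x - a) := by
  have hIcc : uIcc a b = Icc a b := uIcc_of_le hab.le
  rw [← integral_integral_comp_max hab.le (AntitoneOn.intervalIntegrable (by rwa [hIcc]))]
  refine integral_congr fun y hy => integral_congr fun x hx => ?_
  rw [hIcc] at hx hy
  exact (hf.map_max hx hy).symm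
end

section
/- Let Ω be a finite set and let φ : P(Ω) → ℤ₂ be a coevent (φ(∅) = 0). Define the φ-center Z_φ = {A ⊆ Ω : φ(B) = φ(B ∩ A) + φ(B ∩ Aᶜ) for all B ⊆ Ω}, where + is addition in ℤ₂. Then Z_φ is a subalgebra of P(Ω): it contains ∅ and Ω, and is closed under complement, intersection and union; moreover φ restricted to Z_φ is additive, i.e. φ(A ∪ B) = φ(A) + φ(B) in ℤ₂ whenever A, B ∈ Z_φ are disjoint. -/
/-- The `φ`-center of a coevent `φ`: the set of events `A` such that
`φ(B) = φ(B ∩ A) ⊕ φ(B ∩ Aᶜ)` for all events `B`. -/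
def phiCenter {Ω : Type*} [Fintype Ω] [DecidableEq Ω]
    (φ : Finset Ω → ZMod 2) : Set (Finset Ω) :=
  {A | ∀ B : Finset Ω, φ B = φ (B ∩ A) + φ (B ∩ Aᶜ)}

theorem phiCenter_subalgebra_and_additive {Ω : Type*} [Fintype Ω] [DecidableEq Ω]
    (φ : Finset Ω → ZMod 2) (h0 : φ ∅ = 0) :
    (∅ : Finset Ω) ∈ phiCenter φ ∧
    (Finset.univ : Finset Ω) ∈ phiCenter φ ∧
    (∀ A ∈ phiCenter φ, Aᶜ ∈ phiCenter φ) ∧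
    (∀ A ∈ phiCenter φ, ∀ B ∈ phiCenter φ, A ∩ B ∈ phiCenter φ) ∧
    (∀ A ∈ phiCenter φ, ∀ B ∈ phiCenter φ, A ∪ B ∈ phiCenter φ) ∧
    (∀ A ∈ phiCenter φ, ∀ B ∈ phiCenter φ, Disjoint A B →
      φ (A ∪ B) = φ A + φ B) := by
  have hcompl : ∀ A ∈ phiCenter φ, Aᶜ ∈ phiCenter φ := by
    intro A hA B
    rw [compl_compl, add_comm]
    exact hA B
  have hinter : ∀ A ∈ phiCenter φ, ∀ B ∈ phiCenter φ, A ∩ B ∈ phiCenter φ := by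
    intro A hA B hB C
    have h1 : φ (C ∩ A) = φ (C ∩ A ∩ B) + φ (C ∩ A ∩ Bᶜ) := hB (C ∩ A)
    have h2 : φ (C ∩ (A ∩ B)ᶜ) = φ (C ∩ (A ∩ B)ᶜ ∩ A) + φ (C ∩ (A ∩ B)ᶜ ∩ Aᶜ) :=
      hA (C ∩ (A ∩ B)ᶜ)
    have e1 : C ∩ (A ∩ B)ᶜ ∩ A = C ∩ A ∩ Bᶜ := by
      ext x; simp only [Finset.mem_inter, Finset.mem_compl, not_and]; tauto
    have e2 : C ∩ (A ∩ B)ᶜ ∩ Aᶜ = C ∩ Aᶜ := by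
      ext x; simp only [Finset.mem_inter, Finset.mem_compl, not_and]; tauto
    have e3 : C ∩ A ∩ B = C ∩ (A ∩ B) := by rw [Finset.inter_assoc]
    rw [e1, e2] at h2
    have key : ∀ a b c : ZMod 2, a + b + (b + c) = a + c := by decide
    calc φ C = φ (C ∩ A) + φ (C ∩ Aᶜ) := hA C
    _ = φ (C ∩ (A ∩ B)) + φ (C ∩ A ∩ Bᶜ) + φ (C ∩ Aᶜ) := by rw [h1, e3]
    _ = φ (C ∩ (A ∩ B)) + (φ (C ∩ A ∩ Bᶜ) + φ (C ∩ Aᶜ)) := by rw [add_assoc]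
    _ = φ (C ∩ (A ∩ B)) + φ (C ∩ (A ∩ B)ᶜ) := by rw [← h2]
  refine ⟨?_, ?_, hcompl, hinter, ?_, ?_⟩
  · intro B; simp [h0]
  · intro B; simp [h0]
  · intro A hA B hB
    have := hcompl _ (hinter _ (hcompl A hA) _ (hcompl B hB))
    simpa [Finset.compl_inter, compl_compl] using this
  · intro A hA B hB hd
    have h := hA (A ∪ B)
    have e1 : (A ∪ B) ∩ A = A := by
      ext x; simp only [Finset.mem_inter, Finset.mem_union]; tauto
    have e2 : (A ∪ B) ∩ Aᶜ = B := by
      ext x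
      simp only [Finset.mem_inter, Finset.mem_union, Finset.mem_compl]
      constructor
      · rintro ⟨h1 | h1, h2⟩ <;> tauto
      · intro hx
        exact ⟨Or.inr hx, fun hxa => (Finset.disjoint_left.mp hd hxa hx)⟩
    rw [e1, e2] at h
    exact h
end

section
/- Let Ω be a finite set and let φ : P(Ω) → ℤ₂ be a coevent such that the real-valued function A ↦ (1 if φ(A) = 1, else 0) is grade-2 additive over ℝ (i.e. φ corresponds to a pure q-measure). Then φ is quadratic: for all mutually disjoint A, B, C ⊆ Ω, φ(A ∪ B ∪ C) = φ(A ∪ B) ⊕ φ(A ∪ C) ⊕ φ(B ∪ C) ⊕ φ(A) ⊕ φ(B) ⊕ φ(C), where ⊕ denotes addition in ℤ₂. -/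
theorem ZMod.ite_eq_one_two_eq_val (x : ZMod 2) :
    (if x = 1 then (1 : ℝ) else 0) = x.val := by
  match x with
  | 0 => norm_num
  | 1 => rw [if_pos rfl, ZMod.val_one, Nat.cast_one]

theorem ZMod.two_eq_add_of_val_eq_add_sub {a ab ac bc a' b' c' : ZMod 2}
    (h : (a.val : ℝ) = ab.val + ac.val + bc.val - a'.val - b'.val - c'.val) :
    a = ab + ac + bc + a' + b' + c' := by
  have hZ : (a.val : ℤ) = ab.val + ac.val + bc.val - a'.val - b'.val - c'.val := by
    exact_mod_cast h
  have hmod := congrArg (Int.cast : ℤ → ZMod 2) hZ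
  push_cast [ZMod.natCast_val, ZMod.cast_id'] at hmod
  simpa only [CharTwo.sub_eq_add] using hmod

theorem pure_coevent_is_quadratic_general {Ω : Type*} [DecidableEq Ω]
    (φ : Finset Ω → ZMod 2)
    (hpure : Grade2Additive (fun A => if φ A = 1 then (1 : ℝ) else 0)) :
    ∀ A B C : Finset Ω, Disjoint A B → Disjoint A C → Disjoint B C →
      φ (A ∪ B ∪ C) = φ (A ∪ B) + φ (A ∪ C) + φ (B ∪ C) + φ A + φ B + φ C := by
  intro A B C hAB hAC hBC
  have h := hpure A B C hAB hAC hBC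
  simp only [ZMod.ite_eq_one_two_eq_val] at h
  exact ZMod.two_eq_add_of_val_eq_add_sub h

theorem pure_coevent_is_quadratic {Ω : Type*} [Fintype Ω] [DecidableEq Ω]
    (φ : Finset Ω → ZMod 2) (h0 : φ ∅ = 0)
    (hpure : Grade2Additive (fun A => if φ A = 1 then (1 : ℝ) else 0)) :
    ∀ A B C : Finset Ω, Disjoint A B → Disjoint A C → Disjoint B C →
      φ (A ∪ B ∪ C) = φ (A ∪ B) + φ (A ∪ C) + φ (B ∪ C) + φ A + φ B + φ C :=
  pure_coevent_is_quadratic_general φ hpure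
end

section
/- Let Ω be a finite set and let ν be a function assigning a nonnegative real number to each pure coevent on P(Ω). Then there exists a q-measure μ on P(Ω) that transfers to ν; namely, the set function μ(A) = Σ_{φ pure, φ(A) = 1} ν(φ) is nonnegative and grade-2 additive and satisfies the transfer equation. -/
/-- A coevent is pure if it takes values in `{0,1}`, vanishes on `∅`, and is
grade-2 additive over `ℝ`. -/
def PureCoevent {Ω : Type*} [DecidableEq Ω] (φ : Finset Ω → ℝ) : Prop :=
  φ ∅ = 0 ∧ (∀ A, φ A = 0 ∨ φ A = 1) ∧ Grade2Additive φ

lemma pure_finite {Ω : Type*} [Fintype Ω] [DecidableEq Ω] :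
    {ψ : Finset Ω → ℝ | PureCoevent ψ}.Finite := by
  apply Set.Finite.of_finite_image (f := fun ψ => {A : Finset Ω | ψ A = 1})
  · exact Set.toFinite _
  · intro ψ₁ h₁ ψ₂ h₂ h
    funext A
    simp only at h
    have e : (ψ₁ A = 1) ↔ (ψ₂ A = 1) := by
      rw [Set.ext_iff] at h
      simpa using h A
    rcases h₁.2.1 A with h1 | h1 <;> rcases h₂.2.1 A with h2 | h2 <;>
      simp_all

theorem measure_on_pure_coevents_comes_from_qMeasure
    {Ω : Type*} [Fintype Ω] [DecidableEq Ω]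
    (ν : (Finset Ω → ℝ) → ℝ)
    (hν : ∀ φ : Finset Ω → ℝ, PureCoevent φ → 0 ≤ ν φ) :
    ∃ μ : Finset Ω → ℝ,
      (∀ A, 0 ≤ μ A) ∧ Grade2Additive μ ∧
      ∀ A : Finset Ω,
        μ A = ∑ᶠ φ ∈ {ψ : Finset Ω → ℝ | PureCoevent ψ ∧ ψ A = 1}, ν φ := by
  classical
  have hP : {ψ : Finset Ω → ℝ | PureCoevent ψ}.Finite := pure_finite
  set P : Finset (Finset Ω → ℝ) := hP.toFinset with hPdef
  have hmemP : ∀ φ, φ ∈ P ↔ PureCoevent φ := by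
    intro φ; simp [hPdef, Set.Finite.mem_toFinset]
  refine ⟨fun A => ∑ φ ∈ P, ν φ * φ A, ?_, ?_, ?_⟩
  · intro A
    apply Finset.sum_nonneg
    intro φ hφ
    have hp := (hmemP φ).1 hφ
    rcases hp.2.1 A with h | h <;> simp [h, hν φ hp]
  · intro A B C hAB hAC hBC
    dsimp only
    have : ∀ φ ∈ P, ν φ * φ (A ∪ B ∪ C) =
        ν φ * φ (A ∪ B) + ν φ * φ (A ∪ C) + ν φ * φ (B ∪ C)
          - ν φ * φ A - ν φ * φ B - ν φ * φ C := by
      intro φ hφ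
      have hp := (hmemP φ).1 hφ
      rw [hp.2.2 A B C hAB hAC hBC]; ring
    rw [Finset.sum_congr rfl this]
    simp [Finset.sum_add_distrib, Finset.sum_sub_distrib]
  · intro A
    have hS : {ψ : Finset Ω → ℝ | PureCoevent ψ ∧ ψ A = 1}.Finite :=
      hP.subset (fun ψ hψ => hψ.1)
    dsimp only
    rw [finsum_mem_eq_finite_toFinset_sum _ hS]
    have hkey : hS.toFinset = P.filter (fun φ => φ A = 1) := by
      ext φ
      simp only [Set.Finite.mem_toFinset, Set.mem_setOf_eq, Finset.mem_filter, hmemP]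
    rw [hkey]
    rw [← Finset.sum_filter_add_sum_filter_not P (fun φ => φ A = 1)]
    have h0 : ∑ φ ∈ P.filter (fun φ => ¬ φ A = 1), ν φ * φ A = 0 := by
      apply Finset.sum_eq_zero
      intro φ hφ
      rw [Finset.mem_filter] at hφ
      rcases ((hmemP φ).1 hφ.1).2.1 A with h | h
      · simp [h]
      · exact absurd h hφ.2
    rw [h0, add_zero]
    apply Finset.sum_congr rfl
    intro φ hφ
    rw [Finset.mem_filter] at hφ
    simp [hφ.2]
end

section
/- Let Ω be a finite set and let ν assign a nonnegative real ν(S) to each nonempty subset S ⊆ Ω. Define μ : P(Ω) → ℝ by μ(A) = Σ_{S ⊆ A, S ≠ ∅} ν(S) (so that μ is the q-measure obtained by transferring along the multiplicative coevents S* given by S*(A) = 1 iff S ⊆ A). If μ is grade-2 additive, then ν(S) = 0 for every subset S with at least 3 elements; that is, ν vanishes except on multiplicative coevents that are quadratic. -/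
theorem le_iff_disjoint_of_le_sup {α : Type*} [DistribLattice α] [OrderBot α] {a b c : α}
    (ha : a ≤ b ⊔ c) (hbc : Disjoint b c) : a ≤ b ↔ Disjoint a c :=
  ⟨hbc.mono_left, Disjoint.left_le_of_le_sup_right ha⟩

open Finset

section

variable {Ω : Type*} [DecidableEq Ω]

def multiplicativeTransfer (ν : Finset Ω → ℝ) (A : Finset Ω) : ℝ :=
  ∑ S ∈ A.powerset.filter (· ≠ ∅), ν S

theorem multiplicativeTransfer_eq_sum_ite {ν : Finset Ω → ℝ} {X U : Finset Ω} (hX : X ⊆ U) :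
    multiplicativeTransfer ν X = ∑ T ∈ U.powerset, if T ≠ ∅ ∧ T ⊆ X then ν T else 0 := by
  rw [← sum_filter, multiplicativeTransfer]
  congr 1
  ext T
  simp only [mem_filter, mem_powerset]
  exact ⟨fun ⟨hTX, hT⟩ => ⟨hTX.trans hX, hT, hTX⟩, fun ⟨_, hT, hTX⟩ => ⟨hTX, hT⟩⟩

theorem multiplicativeTransfer_grade2_defect (ν : Finset Ω → ℝ) {A B C : Finset Ω}
    (hAB : Disjoint A B) (hAC : Disjoint A C) (hBC : Disjoint B C) :
    multiplicativeTransfer ν (A ∪ B ∪ C) - multiplicativeTransfer ν (A ∪ B)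
      - multiplicativeTransfer ν (A ∪ C) - multiplicativeTransfer ν (B ∪ C)
      + multiplicativeTransfer ν A + multiplicativeTransfer ν B + multiplicativeTransfer ν C
      = ∑ T ∈ (A ∪ B ∪ C).powerset with ¬Disjoint T A ∧ ¬Disjoint T B ∧ ¬Disjoint T C, ν T := by
  set U := A ∪ B ∪ C
  have hU₁ : U = (A ∪ B) ∪ C := rfl
  have hU₂ : U = (A ∪ C) ∪ B := union_right_comm A B C
  have hU₃ : U = (B ∪ C) ∪ A := by rw [union_comm, ← union_assoc]
  have hU₄ : U = A ∪ (B ∪ C) := union_assoc A B C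
  have hU₅ : U = B ∪ (A ∪ C) := by rw [union_left_comm, ← union_assoc]
  have hU₆ : U = C ∪ (A ∪ B) := union_comm _ _
  rw [multiplicativeTransfer_eq_sum_ite subset_rfl,
    multiplicativeTransfer_eq_sum_ite (hU₁ ▸ subset_union_left : A ∪ B ⊆ U),
    multiplicativeTransfer_eq_sum_ite (hU₂ ▸ subset_union_left : A ∪ C ⊆ U),
    multiplicativeTransfer_eq_sum_ite (hU₃ ▸ subset_union_left : B ∪ C ⊆ U),
    multiplicativeTransfer_eq_sum_ite (hU₄ ▸ subset_union_left : A ⊆ U),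
    multiplicativeTransfer_eq_sum_ite (hU₅ ▸ subset_union_left : B ⊆ U),
    multiplicativeTransfer_eq_sum_ite (hU₆ ▸ subset_union_left : C ⊆ U), sum_filter,
    ← sum_sub_distrib, ← sum_sub_distrib, ← sum_sub_distrib, ← sum_add_distrib,
    ← sum_add_distrib, ← sum_add_distrib]
  refine sum_congr rfl fun T hT => ?_
  have hTU : T ⊆ U := mem_powerset.mp hT
  have hAB_C : Disjoint (A ∪ B) C := disjoint_union_left.mpr ⟨hAC, hBC⟩
  have hAC_B : Disjoint (A ∪ C) B := disjoint_union_left.mpr ⟨hAB, hBC.symm⟩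
  have hBC_A : Disjoint (B ∪ C) A := disjoint_union_left.mpr ⟨hAB.symm, hAC.symm⟩
  have hne : T ≠ ∅ ↔ ¬(Disjoint T A ∧ Disjoint T B ∧ Disjoint T C) := by
    rw [Ne, ← bot_eq_empty, ← disjoint_of_le_iff_left_eq_bot hTU, disjoint_union_right,
      disjoint_union_right, and_assoc]
  simp only [hne, hTU, and_true, disjoint_union_right,
    le_iff_disjoint_of_le_sup (hU₁ ▸ hTU) hAB_C,
    le_iff_disjoint_of_le_sup (hU₂ ▸ hTU) hAC_B,
    le_iff_disjoint_of_le_sup (hU₃ ▸ hTU) hBC_A,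
    le_iff_disjoint_of_le_sup (hU₄ ▸ hTU) hBC_A.symm,
    le_iff_disjoint_of_le_sup (hU₅ ▸ hTU) hAC_B.symm,
    le_iff_disjoint_of_le_sup (hU₆ ▸ hTU) hAB_C.symm]
  by_cases hA : Disjoint T A <;> by_cases hB : Disjoint T B <;> by_cases hC : Disjoint T C <;>
    simp [hA, hB, hC]

theorem eq_zero_of_grade2Additive_multiplicativeTransfer {ν : Finset Ω → ℝ}
    (hν : ∀ S : Finset Ω, S ≠ ∅ → 0 ≤ ν S) (hμ : Grade2Additive (multiplicativeTransfer ν))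
    {A B C T : Finset Ω} (hAB : Disjoint A B) (hAC : Disjoint A C) (hBC : Disjoint B C)
    (hT : T ⊆ A ∪ B ∪ C) (hTA : ¬Disjoint T A) (hTB : ¬Disjoint T B) (hTC : ¬Disjoint T C) :
    ν T = 0 := by
  have hsum := multiplicativeTransfer_grade2_defect ν hAB hAC hBC
  rw [hμ A B C hAB hAC hBC, show ∀ x y z u v w : ℝ, x + y + z - u - v - w - x - y - z + u + v + w
    = 0 by intros; ring] at hsum
  refine (sum_eq_zero_iff_of_nonneg (fun U hU => hν U ?_)).mp hsum.symm T ?_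
  · rintro rfl
    exact (mem_filter.mp hU).2.1 (disjoint_empty_left A)
  · exact mem_filter.mpr ⟨mem_powerset.mpr hT, hTA, hTB, hTC⟩

end

theorem transfer_multiplicative_forces_quadratic_general {Ω : Type*} [DecidableEq Ω]
    (ν : Finset Ω → ℝ) (hν : ∀ S : Finset Ω, S ≠ ∅ → 0 ≤ ν S)
    (hμ : Grade2Additive (fun A : Finset Ω =>
      ∑ S ∈ A.powerset.filter (· ≠ ∅), ν S)) :
    ∀ S : Finset Ω, 3 ≤ S.card → ν S = 0 := by
  intro S hS
  obtain ⟨a, b, c, ha, hb, hc, hab, hac, hbc⟩ := two_lt_card_iff.mp hS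
  have hpartition : {a} ∪ {b} ∪ S \ {a, b} = S := by
    rw [← insert_eq, union_sdiff_of_subset (insert_subset ha (singleton_subset_iff.mpr hb))]
  refine eq_zero_of_grade2Additive_multiplicativeTransfer (A := {a}) (B := {b}) (C := S \ {a, b})
    hν hμ ?_ ?_ ?_ hpartition.ge ?_ ?_ ?_
  · simpa using hab
  · simp
  · simp
  · simpa using ha
  · simpa using hb
  · exact not_disjoint_iff.mpr ⟨c, hc, by simp [hc, hac.symm, hbc.symm]⟩

/-- If the q-measure obtained by transferring nonnegative weights along the
multiplicative coevents is grade-2 additive, then the weight of every subset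
with at least three elements vanishes. -/
theorem transfer_multiplicative_forces_quadratic {Ω : Type*} [Fintype Ω] [DecidableEq Ω]
    (ν : Finset Ω → ℝ) (hν : ∀ S : Finset Ω, S ≠ ∅ → 0 ≤ ν S)
    (hμ : Grade2Additive (fun A : Finset Ω =>
      ∑ S ∈ A.powerset.filter (· ≠ ∅), ν S)) :
    ∀ S : Finset Ω, 3 ≤ S.card → ν S = 0 :=
  transfer_multiplicative_forces_quadratic_general ν hν hμ
end
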